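/- Monotonicity of the differential Riccati flow: if P₁(0) ≤ P₂(0) (in the positive semidefinite order, with both symmetric), then the solutions of Ṗ = AᵀP + PA − PBR^{-1}BᵀP + Q satisfy P₁(t) ≤ P₂(t) for all t ≥ 0 in their common interval of existence. -/

import Mathlib

/-!
The difference `D = P₂ - P₁` solves the linear equation `Ḋ = (Aᵀ - P₂K) D + D (A - KP₁)`
with `K = BR⁻¹Bᵀ`, since the quadratic terms cancel. Symmetric solutions of `Ḋ = F D + D G`
stay positive semidefinite: choose `l` above the numerical range of `F + G` on `[0, T]` and
put `E = D + δ e^{l(t-T)} I`, positive definite at `0`. At a first time `τ` where `E` fails to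
be positive definite it is singular, with kernel vector `w`. As `D w = -c w` and `D` is
symmetric, `d/dt (wᵀ E w) = c (l |w|² - wᵀ (F + G) w) > 0` at `τ`, although `wᵀ E w` decreases
to `0` there. Letting `δ → 0` gives `D T ≥ 0`.
-/

open Matrix

attribute [local instance] Matrix.frobeniusNormedAddCommGroup Matrix.frobeniusNormedSpace

open Filter Topology Set Metric

lemma HasDerivAt.nonpos_of_eventually_le {f : ℝ → ℝ} {f' a : ℝ} (hf : HasDerivAt f f' a)
    (h : ∀ᶠ t in 𝓝[<] a, f a ≤ f t) : f' ≤ 0 := by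
  refine le_of_tendsto ((hasDerivAt_iff_tendsto_slope.1 hf).mono_left (nhdsLT_le_nhdsNE a)) ?_
  filter_upwards [h, self_mem_nhdsWithin] with t hle (ht : t < a)
  rw [slope_def_field]
  exact div_nonpos_of_nonneg_of_nonpos (sub_nonneg.2 hle) (sub_nonpos.2 ht.le)

lemma exists_pos_smul_mem_sphere {E : Type*} [NormedAddCommGroup E] [NormedSpace ℝ E] {v : E}
    (hv : v ≠ 0) : ∃ c : ℝ, 0 < c ∧ ∃ u ∈ sphere (0 : E) 1, v = c • u :=
  ⟨‖v‖, norm_pos_iff.2 hv, ‖v‖⁻¹ • v, by simpa using norm_smul_inv_norm (𝕜 := ℝ) hv,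
    (smul_inv_smul₀ (norm_ne_zero_iff.2 hv) v).symm⟩

theorem riccati_sub_riccati {α : Type*} [Ring α] (a a' k q p₁ p₂ : α) :
    (a' * p₂ + p₂ * a - p₂ * k * p₂ + q) - (a' * p₁ + p₁ * a - p₁ * k * p₁ + q) =
      (a' - p₂ * k) * (p₂ - p₁) + (p₂ - p₁) * (a - k * p₁) := by
  noncomm_ring

namespace Matrix

variable {ι : Type*} [Fintype ι]

lemma dotProduct_self_pos {v : ι → ℝ} (hv : v ≠ 0) : 0 < v ⬝ᵥ v :=
  (Fintype.sum_nonneg fun i => mul_self_nonneg (v i)).lt_of_ne' (dotProduct_self_eq_zero.not.2 hv)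

lemma smul_dotProduct_mulVec_smul (M : Matrix ι ι ℝ) (c : ℝ) (v : ι → ℝ) :
    (c • v) ⬝ᵥ M *ᵥ (c • v) = c ^ 2 * (v ⬝ᵥ M *ᵥ v) := by
  simp only [mulVec_smul, dotProduct_smul, smul_dotProduct, smul_eq_mul]
  ring

lemma dotProduct_mulVec_mul_add_mul {D : Matrix ι ι ℝ} (hD : D.IsHermitian) {w : ι → ℝ}
    {a : ℝ} (hw : D *ᵥ w = a • w) (F G : Matrix ι ι ℝ) :
    w ⬝ᵥ (F * D + D * G) *ᵥ w = a * (w ⬝ᵥ (F + G) *ᵥ w) := by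
  have hwD : w ᵥ* D = a • w := by
    rw [← mulVec_transpose, ← conjTranspose_eq_transpose_of_trivial, hD, hw]
  rw [add_mulVec, ← mulVec_mulVec, ← mulVec_mulVec, dotProduct_add, hw, dotProduct_mulVec w D,
    hwD, add_mulVec, dotProduct_add, mul_add, mulVec_smul, dotProduct_smul, smul_dotProduct,
    smul_eq_mul, smul_eq_mul]

-- `sphere` is for the sup norm on `ι → ℝ`: it only has to be compact and meet every ray.
lemma posSemidef_of_forall_mem_sphere {M : Matrix ι ι ℝ} (hM : M.IsHermitian)
    (h : ∀ u ∈ sphere (0 : ι → ℝ) 1, 0 ≤ u ⬝ᵥ M *ᵥ u) : M.PosSemidef := by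
  refine .of_dotProduct_mulVec_nonneg hM fun v => ?_
  rw [star_trivial]
  rcases eq_or_ne v 0 with rfl | hv
  · simp
  obtain ⟨c, -, u, hu, rfl⟩ := exists_pos_smul_mem_sphere hv
  rw [smul_dotProduct_mulVec_smul]
  exact mul_nonneg (sq_nonneg c) (h u hu)

lemma exists_mem_sphere_dotProduct_mulVec_nonpos {M : Matrix ι ι ℝ} (hM : M.IsHermitian)
    (h : ¬M.PosDef) : ∃ u ∈ sphere (0 : ι → ℝ) 1, u ⬝ᵥ M *ᵥ u ≤ 0 := by
  contrapose! h
  refine .of_dotProduct_mulVec_pos hM fun v hv => ?_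
  obtain ⟨c, hc, u, hu, rfl⟩ := exists_pos_smul_mem_sphere hv
  rw [star_trivial, smul_dotProduct_mulVec_smul]
  exact mul_pos (pow_pos hc 2) (h u hu)

lemma posSemidef_of_forall_posDef_add_smul_one [DecidableEq ι] {M : Matrix ι ι ℝ}
    (h : ∀ δ : ℝ, 0 < δ → (M + δ • 1).PosDef) : M.PosSemidef := by
  have hM : M.IsHermitian := by
    simpa using (h 1 one_pos).isHermitian.sub (isHermitian_one (α := ℝ))
  refine .of_dotProduct_mulVec_nonneg hM fun v => ?_
  rw [star_trivial]
  rcases eq_or_ne v 0 with rfl | hv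
  · simp
  have hpos : ∀ δ > 0, 0 < v ⬝ᵥ M *ᵥ v + δ * (v ⬝ᵥ v) := fun δ hδ => by
    simpa [add_mulVec, smul_mulVec] using (h δ hδ).dotProduct_mulVec_pos hv
  have hlim : Tendsto (fun δ : ℝ => v ⬝ᵥ M *ᵥ v + δ * (v ⬝ᵥ v)) (𝓝[>] 0) (𝓝 (v ⬝ᵥ M *ᵥ v)) :=
    ((continuous_const.add (continuous_id.mul continuous_const)).tendsto' 0 _
      (by simp)).mono_left nhdsWithin_le_nhds
  exact ge_of_tendsto hlim (eventually_nhdsWithin_of_forall fun δ hδ => (hpos δ hδ).le)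

lemma _root_.HasDerivAt.dotProduct_mulVec {E : ℝ → Matrix ι ι ℝ} {E' : Matrix ι ι ℝ} {t : ℝ}
    (hE : HasDerivAt E E' t) (v : ι → ℝ) :
    HasDerivAt (fun s => v ⬝ᵥ E s *ᵥ v) (v ⬝ᵥ E' *ᵥ v) t := by
  let L : Matrix ι ι ℝ →ₗ[ℝ] ℝ :=
    { toFun := fun M => v ⬝ᵥ M *ᵥ v
      map_add' := fun M N => by simp only [add_mulVec, dotProduct_add]
      map_smul' := fun c M => by simp only [smul_mulVec, dotProduct_smul, RingHom.id_apply] }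
  exact L.toContinuousLinearMap.hasFDerivAt.comp_hasDerivAt t hE

lemma continuous_dotProduct_mulVec {E : ℝ → Matrix ι ι ℝ} (hE : Continuous E) :
    Continuous fun p : ℝ × (ι → ℝ) => p.2 ⬝ᵥ E p.1 *ᵥ p.2 :=
  continuous_snd.dotProduct ((hE.comp continuous_fst).matrix_mulVec continuous_snd)

lemma exists_dotProduct_mulVec_lt_mul {M : ℝ → Matrix ι ι ℝ} (hM : Continuous M) {S : Set ℝ}
    (hS : IsCompact S) : ∃ l : ℝ, ∀ t ∈ S, ∀ v ≠ 0, v ⬝ᵥ M t *ᵥ v < l * (v ⬝ᵥ v) := by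
  have hsq : ∀ u ∈ sphere (0 : ι → ℝ) 1, 0 < u ⬝ᵥ u := fun u hu =>
    dotProduct_self_pos (ne_zero_of_mem_unit_sphere ⟨u, hu⟩)
  have hcont : ContinuousOn (fun p : ℝ × (ι → ℝ) => p.2 ⬝ᵥ M p.1 *ᵥ p.2 / (p.2 ⬝ᵥ p.2))
      (S ×ˢ sphere 0 1) :=
    (continuous_dotProduct_mulVec hM).continuousOn.div
      (continuous_snd.dotProduct continuous_snd).continuousOn fun p hp => (hsq _ hp.2).ne'
  obtain ⟨C, hC⟩ := (hS.prod (isCompact_sphere 0 1)).bddAbove_image hcont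
  refine ⟨C + 1, fun t ht v hv => ?_⟩
  obtain ⟨c, hc, u, hu, rfl⟩ := exists_pos_smul_mem_sphere hv
  have hCu : u ⬝ᵥ M t *ᵥ u / (u ⬝ᵥ u) ≤ C := hC ⟨(t, u), ⟨ht, hu⟩, rfl⟩
  rw [div_le_iff₀ (hsq u hu)] at hCu
  rw [smul_dotProduct_mulVec_smul, smul_dotProduct, dotProduct_smul, smul_eq_mul, smul_eq_mul]
  nlinarith [hsq u hu, pow_pos hc 2]

lemma exists_first_dotProduct_mulVec_nonpos {E : ℝ → Matrix ι ι ℝ} (hE : Continuous E) {T : ℝ}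
    (h : ∃ t ∈ Icc 0 T, ∃ u ∈ sphere (0 : ι → ℝ) 1, u ⬝ᵥ E t *ᵥ u ≤ 0) :
    ∃ τ ∈ Icc 0 T, ∃ w ∈ sphere (0 : ι → ℝ) 1, w ⬝ᵥ E τ *ᵥ w ≤ 0 ∧
      ∀ t ∈ Ico 0 τ, ∀ u ∈ sphere (0 : ι → ℝ) 1, 0 < u ⬝ᵥ E t *ᵥ u := by
  set K := (Icc 0 T ×ˢ sphere (0 : ι → ℝ) 1) ∩ {p | p.2 ⬝ᵥ E p.1 *ᵥ p.2 ≤ 0}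
  have hbox : IsCompact (Icc 0 T ×ˢ sphere (0 : ι → ℝ) 1) :=
    isCompact_Icc.prod (isCompact_sphere 0 1)
  have hclosed : IsClosed {p : ℝ × (ι → ℝ) | p.2 ⬝ᵥ E p.1 *ᵥ p.2 ≤ 0} :=
    isClosed_le (continuous_dotProduct_mulVec hE) continuous_const
  have hK : IsCompact (Prod.fst '' K) := (hbox.inter_right hclosed).image continuous_fst
  have hne : (Prod.fst '' K).Nonempty := by
    obtain ⟨t, ht, u, hu, htu⟩ := h
    exact ⟨t, (t, u), ⟨⟨ht, hu⟩, htu⟩, rfl⟩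
  obtain ⟨⟨τ, w⟩, ⟨⟨hτ, hw⟩, hτw⟩, hτK : τ = _⟩ := hK.sInf_mem hne
  refine ⟨τ, hτ, w, hw, hτw, fun t ht u hu => ?_⟩
  by_contra! htu
  have hτt : τ ≤ t :=
    hτK ▸ csInf_le hK.bddBelow ⟨(t, u), ⟨⟨⟨ht.1, ht.2.le.trans hτ.2⟩, hu⟩, htu⟩, rfl⟩
  exact hτt.not_gt ht.2

theorem posDef_of_hasDerivAt_of_mulVec_eq_zero {E E' : ℝ → Matrix ι ι ℝ} {T : ℝ}
    (hE : ∀ t, HasDerivAt E (E' t) t) (hherm : ∀ t, (E t).IsHermitian) (h0 : (E 0).PosDef)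
    (hker : ∀ t ∈ Icc 0 T, ∀ w ≠ 0, E t *ᵥ w = 0 → 0 < w ⬝ᵥ E' t *ᵥ w) :
    ∀ t ∈ Icc 0 T, (E t).PosDef := by
  by_contra! hbad
  obtain ⟨t, ht, hnot⟩ := hbad
  have hEc : Continuous E := continuous_iff_continuousAt.2 fun t => (hE t).continuousAt
  obtain ⟨τ, hτ, w, hw, hτw, hbefore⟩ := exists_first_dotProduct_mulVec_nonpos hEc
    ⟨t, ht, exists_mem_sphere_dotProduct_mulVec_nonpos (hherm t) hnot⟩
  have hw0 : w ≠ 0 := ne_zero_of_mem_unit_sphere ⟨w, hw⟩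
  have hτpos : 0 < τ := by
    refine hτ.1.lt_of_ne fun h => ?_
    subst h
    exact hτw.not_gt (by simpa using h0.dotProduct_mulVec_pos hw0)
  have hleft : ∀ u ∈ sphere (0 : ι → ℝ) 1, ∀ᶠ s in 𝓝[<] τ, 0 < u ⬝ᵥ E s *ᵥ u := fun u hu => by
    filter_upwards [Ioo_mem_nhdsLT hτpos] with s hs using hbefore s ⟨hs.1.le, hs.2⟩ u hu
  have hpsd : (E τ).PosSemidef := posSemidef_of_forall_mem_sphere (hherm τ) fun u hu =>
    ge_of_tendsto (((hE τ).dotProduct_mulVec u).continuousAt.tendsto.mono_left nhdsWithin_le_nhds)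
      ((hleft u hu).mono fun s hs => hs.le)
  have hτw0 : w ⬝ᵥ E τ *ᵥ w = 0 :=
    le_antisymm hτw (by simpa using hpsd.dotProduct_mulVec_nonneg w)
  have hkerw : E τ *ᵥ w = 0 := (hpsd.dotProduct_mulVec_zero_iff w).1 (by simpa using hτw0)
  have hderiv : w ⬝ᵥ E' τ *ᵥ w ≤ 0 := ((hE τ).dotProduct_mulVec w).nonpos_of_eventually_le
    ((hleft w hw).mono fun s hs => hτw0 ▸ hs.le)
  exact (hker τ hτ w hw0 hkerw).not_ge hderiv

theorem posSemidef_of_hasDerivAt_mul_add_mul [DecidableEq ι] {D F G : ℝ → Matrix ι ι ℝ}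
    (hD : ∀ t, HasDerivAt D (F t * D t + D t * G t) t) (hherm : ∀ t, (D t).IsHermitian)
    (hF : Continuous F) (hG : Continuous G) (h0 : (D 0).PosSemidef) {T : ℝ} (hT : 0 ≤ T) :
    (D T).PosSemidef := by
  obtain ⟨l, hl⟩ := exists_dotProduct_mulVec_lt_mul (hF.add hG) (isCompact_Icc (a := 0) (b := T))
  refine posSemidef_of_forall_posDef_add_smul_one fun δ hδ => ?_
  set c : ℝ → ℝ := fun t => δ * Real.exp (l * (t - T))
  have hc : ∀ t, HasDerivAt c (c t * l) t := fun t => by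
    refine ((((hasDerivAt_id' t).sub_const T).const_mul l).exp.const_mul δ).congr_deriv ?_
    ring
  have hcpos : ∀ t, 0 < c t := fun t => mul_pos hδ (Real.exp_pos _)
  have hcI : ∀ t, (c t • (1 : Matrix ι ι ℝ)).PosDef := fun t => PosDef.one.smul (hcpos t)
  have hker : ∀ t ∈ Icc 0 T, ∀ w ≠ 0, (D t + c t • 1) *ᵥ w = 0 →
      0 < w ⬝ᵥ (F t * D t + D t * G t + (c t * l) • 1) *ᵥ w := by
    intro t ht w hw hkerw
    have hDw : D t *ᵥ w = (-c t) • w := by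
      rw [add_mulVec, smul_mulVec, one_mulVec] at hkerw
      rw [neg_smul, eq_neg_of_add_eq_zero_left hkerw]
    have hlw := hl t ht w hw
    rw [Pi.add_apply] at hlw
    rw [add_mulVec, dotProduct_add, dotProduct_mulVec_mul_add_mul (hherm t) hDw, smul_mulVec,
      one_mulVec, dotProduct_smul, smul_eq_mul]
    linarith [mul_pos (hcpos t) (sub_pos.2 hlw)]
  simpa [c] using posDef_of_hasDerivAt_of_mulVec_eq_zero (E := fun t => D t + c t • 1)
    (fun t => (hD t).add ((hc t).smul_const 1)) (fun t => (hherm t).add (hcI t).isHermitian)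
    (PosDef.posSemidef_add h0 (hcI 0)) hker T ⟨hT, le_rfl⟩

end Matrix

theorem riccati_flow_monotone_general {n m : ℕ}
    (A : Matrix (Fin n) (Fin n) ℝ) (B : Matrix (Fin n) (Fin m) ℝ)
    (Q : Matrix (Fin n) (Fin n) ℝ) (R : Matrix (Fin m) (Fin m) ℝ)
    (P₁ P₂ : ℝ → Matrix (Fin n) (Fin n) ℝ)
    (hsymm₁ : ∀ t : ℝ, (P₁ t).IsSymm) (hsymm₂ : ∀ t : ℝ, (P₂ t).IsSymm)
    (hode₁ : ∀ t : ℝ, HasDerivAt P₁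
      (Aᵀ * P₁ t + P₁ t * A - P₁ t * B * R⁻¹ * Bᵀ * P₁ t + Q) t)
    (hode₂ : ∀ t : ℝ, HasDerivAt P₂
      (Aᵀ * P₂ t + P₂ t * A - P₂ t * B * R⁻¹ * Bᵀ * P₂ t + Q) t)
    (hinit : (P₂ 0 - P₁ 0).PosSemidef) :
    ∀ t : ℝ, 0 ≤ t → (P₂ t - P₁ t).PosSemidef := by
  intro T hT
  set K := B * R⁻¹ * Bᵀ
  have hD : ∀ t, HasDerivAt (fun s => P₂ s - P₁ s)
      ((Aᵀ - P₂ t * K) * (P₂ t - P₁ t) + (P₂ t - P₁ t) * (A - K * P₁ t)) t := fun t => by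
    refine ((hode₂ t).sub (hode₁ t)).congr_deriv ?_
    rw [← riccati_sub_riccati (q := Q)]
    simp only [K, Matrix.mul_assoc]
  have hP₁ : Continuous P₁ := continuous_iff_continuousAt.2 fun t => (hode₁ t).continuousAt
  have hP₂ : Continuous P₂ := continuous_iff_continuousAt.2 fun t => (hode₂ t).continuousAt
  exact posSemidef_of_hasDerivAt_mul_add_mul hD
    (fun t => isHermitian_iff_isSymm.2 ((hsymm₂ t).sub (hsymm₁ t)))
    (continuous_const.sub (hP₂.mul continuous_const))
    (continuous_const.sub (continuous_const.mul hP₁)) hinit hT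

/-- Monotonicity of the differential Riccati flow: if `P₁(0) ≤ P₂(0)` in the Loewner
order (both symmetric), then the solutions of `Ṗ = AᵀP + PA − PBR⁻¹BᵀP + Q` satisfy
`P₁(t) ≤ P₂(t)` for all `t ≥ 0`. -/
theorem riccati_flow_monotone {n m : ℕ}
    (A : Matrix (Fin n) (Fin n) ℝ) (B : Matrix (Fin n) (Fin m) ℝ)
    (Q : Matrix (Fin n) (Fin n) ℝ) (R : Matrix (Fin m) (Fin m) ℝ)
    (hQ : Q.IsSymm) (hR : R.PosDef)
    (P₁ P₂ : ℝ → Matrix (Fin n) (Fin n) ℝ)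
    (hsymm₁ : ∀ t : ℝ, (P₁ t).IsSymm) (hsymm₂ : ∀ t : ℝ, (P₂ t).IsSymm)
    (hode₁ : ∀ t : ℝ, HasDerivAt P₁
      (Aᵀ * P₁ t + P₁ t * A - P₁ t * B * R⁻¹ * Bᵀ * P₁ t + Q) t)
    (hode₂ : ∀ t : ℝ, HasDerivAt P₂
      (Aᵀ * P₂ t + P₂ t * A - P₂ t * B * R⁻¹ * Bᵀ * P₂ t + Q) t)
    (hinit : (P₂ 0 - P₁ 0).PosSemidef) :
    ∀ t : ℝ, 0 ≤ t → (P₂ t - P₁ t).PosSemidef :=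
  riccati_flow_monotone_general A B Q R P₁ P₂ hsymm₁ hsymm₂ hode₁ hode₂ hinit
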